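/- Let G be a group, let λ ≥ 2 be a cardinal, and suppose the Brandt λ-extension B_λ(G) is a topological inverse semigroup. Let U be a non-empty open subset of B_λ(G) with U ≠ {0}. Then for every dense subset A of B_λ(G) one has A·U·A = B_λ(G), where A·U·A denotes the set of all products a·u·a' with a, a' ∈ A and u ∈ U. -/

import Mathlib

open Topology Pointwise

/-- `inv` witnesses that the semigroup `S` is an *inverse semigroup*:
for every `x`, `inv x` is the unique `y` with `x*y*x = x` and `y*x*y = y`. -/
structure IsInverseSemigroup (S : Type*) [Mul S] (inv : S → S) : Prop where
  mul_inv_mul : ∀ x : S, x * inv x * x = x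
  inv_mul_inv : ∀ x : S, inv x * x * inv x = inv x
  inv_unique : ∀ x y : S, x * y * x = x → y * x * y = y → y = inv x

/-- The Brandt `λ`-extension `B_λ(G)` of a group `G`, where `λ` is (the cardinal
of) the index type `ι`: the set `(ι × G × ι) ∪ {0}`. -/
abbrev Brandt (ι G : Type*) : Type _ := Option (ι × G × ι)

instance (ι G : Type*) : Zero (Brandt ι G) := ⟨(none : Option (ι × G × ι))⟩

/-- The non-zero element `(α, g, β)` of `B_λ(G)`. -/
def Brandt.elem {ι G : Type*} (α : ι) (g : G) (β : ι) : Brandt ι G := some (α, g, β)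

open Classical in
/-- Multiplication of the Brandt extension:
`(α,a,β)(γ,b,δ) = (α,ab,δ)` if `β = γ` and `0` otherwise, `0` being absorbing. -/
noncomputable instance (ι G : Type*) [Mul G] : Mul (Brandt ι G) :=
  ⟨fun x y =>
    match x, y with
    | some (α, a, β), some (γ, b, δ) =>
        if β = γ then (some (α, a * b, δ) : Option (ι × G × ι)) else none
    | _, _ => none⟩

/-!
For a nonzero `t = (γ, h, δ)` and `u = (α, g, β) ∈ U`, the map `(a, a') ↦ inv a * t * inv a'`
is continuous and sends `((γ, 1, α), (β, g⁻¹h, δ))` to `u`. Density of `A × A` yields `a, a' ∈ A`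
with `inv a * t * inv a' ∈ U` and `a * (inv a * t * inv a') * a' ≠ 0`, and in a Brandt semigroup
such a nonzero product equals `t`. If `0 ∉ A * U * A`, then `a * u * a ≠ 0` for all `a ∈ A`, so
every element of `A` has left index `β`; but that set lies in the closed set where left
multiplication by `(α', 1, α')`, `α' ≠ β`, vanishes, which misses `(α', 1, α')`.
-/

namespace Brandt

section Algebra

variable {ι G : Type*}

lemma eq_zero_or_exists_elem (x : Brandt ι G) : x = 0 ∨ ∃ α g β, x = elem α g β := by
  rcases x with _ | ⟨α, g, β⟩
  exacts [Or.inl rfl, Or.inr ⟨α, g, β, rfl⟩]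

@[simp]
lemma elem_ne_zero (α : ι) (g : G) (β : ι) : elem α g β ≠ 0 := Option.some_ne_none _

variable [Mul G]

@[simp]
protected lemma zero_mul (x : Brandt ι G) : 0 * x = 0 := rfl

@[simp]
protected lemma mul_zero (x : Brandt ι G) : x * 0 = 0 := by
  rcases x with _ | _ <;> rfl

@[simp]
lemma elem_mul_elem_self (α : ι) (a : G) (β : ι) (b : G) (δ : ι) :
    elem α a β * elem β b δ = elem α (a * b) δ :=
  if_pos rfl

lemma elem_mul_elem_of_ne {β γ : ι} (h : β ≠ γ) (α : ι) (a b : G) (δ : ι) :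
    elem α a β * elem γ b δ = 0 :=
  if_neg h

lemma exists_eq_elem_of_mul_elem_mul_ne_zero {x : Brandt ι G} {α β : ι} {g : G}
    (h : x * elem α g β * x ≠ 0) : ∃ g', x = elem β g' α := by
  obtain rfl | ⟨γ, g', δ, rfl⟩ := eq_zero_or_exists_elem x
  · simp at h
  obtain rfl : δ = α := by
    by_contra hδ
    simp [elem_mul_elem_of_ne hδ] at h
  obtain rfl : β = γ := by
    by_contra hβ
    simp [elem_mul_elem_of_ne hβ] at h
  exact ⟨g', rfl⟩

end Algebra

section InverseSemigroup

variable {ι G : Type*} [Group G] {inv : Brandt ι G → Brandt ι G}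

protected lemma inv_zero (hinv : IsInverseSemigroup (Brandt ι G) inv) : inv 0 = 0 :=
  (hinv.inv_unique 0 0 rfl rfl).symm

protected lemma inv_elem (hinv : IsInverseSemigroup (Brandt ι G) inv) (α : ι) (g : G) (β : ι) :
    inv (elem α g β) = elem β g⁻¹ α :=
  (hinv.inv_unique _ _ (by simp) (by simp)).symm

/-- `x * inv x` and `inv y * y` are zero or the identity `(α, 1, α)` at one index. -/
lemma mul_inv_mul_mul_inv_mul_eq_or_eq_zero (hinv : IsInverseSemigroup (Brandt ι G) inv)
    (t x y : Brandt ι G) : x * (inv x * t * inv y) * y = t ∨ x * (inv x * t * inv y) * y = 0 := by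
  obtain rfl | ⟨α, a, β, rfl⟩ := eq_zero_or_exists_elem x
  · simp
  obtain rfl | ⟨γ, b, δ, rfl⟩ := eq_zero_or_exists_elem y
  · simp [Brandt.inv_zero hinv]
  obtain rfl | ⟨α', c, δ', rfl⟩ := eq_zero_or_exists_elem t
  · simp
  simp only [Brandt.inv_elem hinv]
  by_cases hα : α = α'
  · subst hα
    by_cases hδ : δ' = δ
    · subst hδ
      simp [mul_assoc]
    · simp [elem_mul_elem_of_ne hδ]
  · simp [elem_mul_elem_of_ne hα]

end InverseSemigroup

section Topology

variable {ι G : Type*} [Group G] [TopologicalSpace (Brandt ι G)] [T1Space (Brandt ι G)]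
  [ContinuousMul (Brandt ι G)]

lemma not_dense_setOf_eq_elem [Nontrivial ι] (β : ι) :
    ¬ Dense {x : Brandt ι G | ∃ g γ, x = elem β g γ} := by
  intro hdense
  obtain ⟨α, hα⟩ := exists_ne β
  have hsub : {x : Brandt ι G | ∃ g γ, x = elem β g γ} ⊆ (elem α (1 : G) α * ·) ⁻¹' {0} := by
    rintro _ ⟨g, γ, rfl⟩
    exact elem_mul_elem_of_ne hα α 1 g γ
  have hclosed : IsClosed ((elem α (1 : G) α * ·) ⁻¹' {0}) :=
    isClosed_singleton.preimage (continuous_const_mul _)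
  have := hclosed.closure_subset_iff.mpr hsub (hdense (elem α 1 α))
  simp at this

lemma zero_mem_mul_mul_of_dense [Nontrivial ι] {A U : Set (Brandt ι G)} (hA : Dense A)
    {α β : ι} {g : G} (hu : elem α g β ∈ U) : 0 ∈ A * U * A := by
  by_contra h0
  refine not_dense_setOf_eq_elem β (hA.mono fun a ha => ?_)
  obtain ⟨g', hg'⟩ := exists_eq_elem_of_mul_elem_mul_ne_zero (x := a) fun h =>
    h0 (h ▸ Set.mul_mem_mul (Set.mul_mem_mul ha hu) ha)
  exact ⟨g', α, hg'⟩

lemma elem_mem_mul_mul_of_dense {inv : Brandt ι G → Brandt ι G}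
    (hinv : IsInverseSemigroup (Brandt ι G) inv) (hinvc : Continuous inv)
    {A U : Set (Brandt ι G)} (hA : Dense A) (hU : IsOpen U)
    {α β : ι} {g : G} (hu : elem α g β ∈ U) (γ : ι) (h : G) (δ : ι) :
    elem γ h δ ∈ A * U * A := by
  set t := elem γ h δ
  set Ψ : Brandt ι G × Brandt ι G → Brandt ι G := fun p => inv p.1 * t * inv p.2
  have hΨ : Continuous Ψ :=
    ((hinvc.comp continuous_fst).mul continuous_const).mul (hinvc.comp continuous_snd)
  have hΨ₀ : Ψ (elem γ 1 α, elem β (g⁻¹ * h) δ) = elem α g β := by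
    simp [Ψ, t, Brandt.inv_elem hinv]
  set O := Ψ ⁻¹' U ∩ (fun p => p.1 * Ψ p * p.2) ⁻¹' {0}ᶜ
  have hO : IsOpen O :=
    (hU.preimage hΨ).inter <| isClosed_singleton.isOpen_compl.preimage <|
      (continuous_fst.mul hΨ).mul continuous_snd
  have hmemO : (elem γ 1 α, elem β (g⁻¹ * h) δ) ∈ O := by
    refine ⟨show Ψ _ ∈ U from hΨ₀ ▸ hu, ?_⟩
    simp [hΨ₀]
  obtain ⟨⟨a, a'⟩, ⟨hΨU, hne⟩, ha, ha'⟩ := (hA.prod hA).inter_open_nonempty O hO ⟨_, hmemO⟩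
  obtain heq | heq := mul_inv_mul_mul_inv_mul_eq_or_eq_zero hinv t a a'
  · exact heq ▸ Set.mul_mem_mul (Set.mul_mem_mul ha hΨU) ha'
  · exact absurd heq hne

end Topology

end Brandt

/-- Let `G` be a group, `λ ≥ 2` a cardinal and suppose the
Brandt `λ`-extension `B_λ(G)` is a (Hausdorff) topological inverse semigroup.
If `U` is a non-empty open subset of `B_λ(G)` with `U ≠ {0}`, then
`A·U·A = B_λ(G)` for every dense subset `A` of `B_λ(G)`. -/
theorem dense_mul_open_mul_dense_eq_univ_brandt
    {ι G : Type*} [Nontrivial ι] [Group G]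
    [TopologicalSpace (Brandt ι G)] [T2Space (Brandt ι G)]
    (continuous_mul : Continuous fun p : Brandt ι G × Brandt ι G => p.1 * p.2)
    (inv : Brandt ι G → Brandt ι G)
    (hinv : IsInverseSemigroup (Brandt ι G) inv) (hinvc : Continuous inv)
    (U : Set (Brandt ι G)) (hUopen : IsOpen U) (hUne : U.Nonempty)
    (hU0 : U ≠ {0}) :
    ∀ A : Set (Brandt ι G), Dense A → A * U * A = Set.univ := by
  intro A hA
  have : ContinuousMul (Brandt ι G) := ⟨continuous_mul⟩
  obtain ⟨u, huU, hu0⟩ : ∃ u ∈ U, u ≠ 0 := by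
    by_contra! h
    exact hU0 (Set.eq_singleton_iff_nonempty_unique_mem.mpr ⟨hUne, h⟩)
  obtain ⟨α, g, β, rfl⟩ := (Brandt.eq_zero_or_exists_elem u).resolve_left hu0
  refine Set.eq_univ_of_forall fun t => ?_
  obtain rfl | ⟨γ, h, δ, rfl⟩ := Brandt.eq_zero_or_exists_elem t
  · exact Brandt.zero_mem_mul_mul_of_dense hA huU
  · exact Brandt.elem_mem_mul_mul_of_dense hinv hinvc hA hUopen huU γ h δ
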